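/- arXiv:1207.4227 — 11 statements merged into one kernel-verified Lean document; each statement's English description precedes it below -/
import Mathlib

section
/- Let L be a complete lattice and C ⊆ L a subset such that every element of L is the supremum of some subset of C. Then an element p ∈ L is strongly irreducible in L if and only if for all a, b ∈ C, a ⊓ b ≤ p implies a ≤ p or b ≤ p. -/
/-- An element `p` of a lattice is *strongly irreducible* if
`a ⊓ b ≤ p` implies `a ≤ p` or `b ≤ p` for all `a b`. -/
def StronglyIrreducible {α : Type*} [SemilatticeInf α] (p : α) : Prop :=
  ∀ a b : α, a ⊓ b ≤ p → a ≤ p ∨ b ≤ p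

theorem sSup_le_or_sSup_le_of_inf_le {α : Type*} [CompleteLattice α] {S T : Set α} {p : α}
    (h : ∀ s ∈ S, ∀ t ∈ T, s ⊓ t ≤ p → s ≤ p ∨ t ≤ p) (hST : sSup S ⊓ sSup T ≤ p) :
    sSup S ≤ p ∨ sSup T ≤ p := by
  simp only [sSup_le_iff]
  by_contra! ⟨⟨s, hs, hsp⟩, ⟨t, ht, htp⟩⟩
  have hst : s ⊓ t ≤ p := (inf_le_inf (le_sSup hs) (le_sSup ht)).trans hST
  exact (h s hs t ht hst).elim hsp htp

/-- If every element of a complete lattice is a supremum of elements of `C`, then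
strong irreducibility can be tested on elements of `C`. -/
theorem stronglyIrreducible_iff_on_generators
    {α : Type*} [CompleteLattice α] (C : Set α)
    (hC : ∀ a : α, ∃ S : Set α, S ⊆ C ∧ a = sSup S) (p : α) :
    StronglyIrreducible p ↔ ∀ a ∈ C, ∀ b ∈ C, a ⊓ b ≤ p → a ≤ p ∨ b ≤ p := by
  refine ⟨fun h a _ b _ ↦ h a b, fun h a b hab ↦ ?_⟩
  obtain ⟨S, hSC, rfl⟩ := hC a
  obtain ⟨T, hTC, rfl⟩ := hC b
  exact sSup_le_or_sSup_le_of_inf_le (fun s hs t ht ↦ h s (hSC hs) t (hTC ht)) hab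
end

section
/- Let L be a complete lattice and C ⊆ L a chain (any two elements of C are comparable) consisting of strongly irreducible elements of L. Then the infimum ⨅ C is a strongly irreducible element of L. -/
theorem IsChain.exists_not_le_and_not_le {α : Type*} [Preorder α] {C : Set α}
    (hchain : IsChain (· ≤ ·) C) {a b c d : α} (hc : c ∈ C) (hd : d ∈ C)
    (hac : ¬a ≤ c) (hbd : ¬b ≤ d) : ∃ e ∈ C, ¬a ≤ e ∧ ¬b ≤ e := by
  rcases hchain.total hc hd with hcd | hdc
  · exact ⟨c, hc, hac, fun hbc => hbd (hbc.trans hcd)⟩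
  · exact ⟨d, hd, fun had => hac (had.trans hdc), hbd⟩

theorem StronglyIrreducible.of_isGLB_of_isChain {α : Type*} [SemilatticeInf α] {C : Set α}
    {p : α} (hp : IsGLB C p) (hchain : IsChain (· ≤ ·) C)
    (hirr : ∀ c ∈ C, StronglyIrreducible c) : StronglyIrreducible p := by
  intro a b hab
  by_contra! h
  obtain ⟨c, hc, hac⟩ : ∃ c ∈ C, ¬a ≤ c := by
    by_contra! ha
    exact h.1 (hp.2 ha)
  obtain ⟨d, hd, hbd⟩ : ∃ d ∈ C, ¬b ≤ d := by
    by_contra! hb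
    exact h.2 (hp.2 hb)
  obtain ⟨e, he, hae, hbe⟩ := hchain.exists_not_le_and_not_le hc hd hac hbd
  rcases hirr e he a b (hab.trans (hp.1 he)) with hae' | hbe'
  · exact hae hae'
  · exact hbe hbe'

/-- The infimum of a chain of strongly irreducible elements of a complete lattice
is strongly irreducible. -/
theorem sInf_chain_stronglyIrreducible
    {α : Type*} [CompleteLattice α] (C : Set α)
    (hchain : IsChain (· ≤ ·) C)
    (hirr : ∀ c ∈ C, StronglyIrreducible c) :
    StronglyIrreducible (sInf C) :=
  .of_isGLB_of_isChain (isGLB_sInf C) hchain hirr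
end

section
/- Let L be a complete lattice and p ∈ L with Ω(p) ≠ ∅, i.e., there exists x ≠ ⊥ with x ⊓ p = ⊥. Then p is strongly irreducible in L if and only if there exists q ∈ L with q ≠ ⊥ such that p is a pseudo-complement of q (i.e., p ⊓ q = ⊥ and every x ∈ L with x ⊓ q = ⊥ satisfies x ≤ p) and the interval [⊥, q] is uniform (i.e., for all x, y ≤ q with x ≠ ⊥ and y ≠ ⊥ one has x ⊓ y ≠ ⊥). -/
section

variable {α : Type*} [SemilatticeInf α] [OrderBot α] {p q : α}

/-- The interval `[⊥, q]` is uniform. -/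
def IsUniform (q : α) : Prop :=
  ∀ x y : α, x ≤ q → y ≤ q → x ≠ ⊥ → y ≠ ⊥ → x ⊓ y ≠ ⊥

theorem StronglyIrreducible.le_or_le_of_inf_eq_bot (hp : StronglyIrreducible p) {a b : α}
    (hab : a ⊓ b = ⊥) : a ≤ p ∨ b ≤ p :=
  hp a b (hab ▸ bot_le)

theorem StronglyIrreducible.isGreatest_inf_eq_bot (hp : StronglyIrreducible p) (hq : q ≠ ⊥)
    (hqp : q ⊓ p = ⊥) : IsGreatest {x | x ⊓ q = ⊥} p := by
  refine ⟨show p ⊓ q = ⊥ by rwa [inf_comm], fun x hx => ?_⟩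
  have hq_not_le : ¬q ≤ p := fun h => hq (by rwa [inf_eq_left.mpr h] at hqp)
  exact (hp.le_or_le_of_inf_eq_bot hx).resolve_right hq_not_le

theorem StronglyIrreducible.isUniform (hp : StronglyIrreducible p) (hqp : q ⊓ p = ⊥) :
    IsUniform q := by
  have eq_bot_of_le {x : α} (hxq : x ≤ q) (hxp : x ≤ p) : x = ⊥ :=
    le_bot_iff.mp (hqp ▸ le_inf hxq hxp)
  intro x y hxq hyq hx hy hxy
  rcases hp.le_or_le_of_inf_eq_bot hxy with hxp | hyp
  · exact hx (eq_bot_of_le hxq hxp)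
  · exact hy (eq_bot_of_le hyq hyp)

theorem IsUniform.stronglyIrreducible (hq : IsUniform q) (hp : IsGreatest {x | x ⊓ q = ⊥} p) :
    StronglyIrreducible p := by
  intro a b hab
  by_cases ha : a ⊓ q = ⊥
  · exact Or.inl (hp.2 ha)
  by_cases hb : b ⊓ q = ⊥
  · exact Or.inr (hp.2 hb)
  refine absurd (le_bot_iff.mp ?_) (hq (a ⊓ q) (b ⊓ q) inf_le_right inf_le_right ha hb)
  calc a ⊓ q ⊓ (b ⊓ q) = a ⊓ b ⊓ q := by rw [inf_inf_inf_comm, inf_idem]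
    _ ≤ p ⊓ q := inf_le_inf_right q hab
    _ = ⊥ := hp.1

end

/-- Suppose `Ω(p) ≠ ∅`. Then `p` is strongly irreducible iff `p` is a pseudo-complement
of some element `q ≠ ⊥` with the interval `[⊥, q]` uniform. -/
theorem stronglyIrreducible_iff_pseudoComplement_uniform
    {α : Type*} [CompleteLattice α] (p : α)
    (hΩ : ∃ x : α, x ≠ ⊥ ∧ x ⊓ p = ⊥) :
    StronglyIrreducible p ↔
      ∃ q : α, q ≠ ⊥ ∧ p ⊓ q = ⊥ ∧ (∀ x : α, x ⊓ q = ⊥ → x ≤ p) ∧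
        (∀ x y : α, x ≤ q → y ≤ q → x ≠ ⊥ → y ≠ ⊥ → x ⊓ y ≠ ⊥) := by
  obtain ⟨q, hq, hqp⟩ := hΩ
  constructor
  · intro hp
    obtain ⟨hpq, hpc⟩ := hp.isGreatest_inf_eq_bot hq hqp
    exact ⟨q, hq, hpq, fun x hx => hpc hx, hp.isUniform hqp⟩
  · rintro ⟨q, -, hpq, hpc, huni⟩
    exact IsUniform.stronglyIrreducible huni ⟨hpq, fun x hx => hpc x hx⟩
end

section
/- Let L be a complete lattice and p ∈ L with Ω(p) ≠ ∅, i.e., there exists x ≠ ⊥ with x ⊓ p = ⊥. Then p is strongly irreducible in L if and only if p is irreducible in L and weakly ∧-distributive in L. -/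
/-- An element `p` of a meet-semilattice is *irreducible* if
`a ⊓ b ≤ p` implies `a ≤ p` or `b ≤ p` for all `a b` lying above `p`. -/
def Irreducible' {α : Type*} [SemilatticeInf α] (p : α) : Prop :=
  ∀ a b : α, p ≤ a → p ≤ b → a ⊓ b ≤ p → a ≤ p ∨ b ≤ p

def WeaklyInfDistributive {α : Type*} [Lattice α] [OrderBot α] (p : α) : Prop :=
  ∀ x y : α, x ⊓ y = ⊥ → p = (x ⊔ p) ⊓ (y ⊔ p)

section

variable {α : Type*} {p : α}

theorem StronglyIrreducible.irreducible' [SemilatticeInf α] (hp : StronglyIrreducible p) :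
    Irreducible' p :=
  fun a b _ _ hab => hp a b hab

variable [Lattice α] [OrderBot α]

theorem StronglyIrreducible.weaklyInfDistributive (hp : StronglyIrreducible p) :
    WeaklyInfDistributive p := by
  intro x y hxy
  rcases hp x y (hxy ▸ bot_le) with hx | hy
  · rw [sup_eq_right.mpr hx, inf_eq_left.mpr le_sup_right]
  · rw [sup_eq_right.mpr hy, inf_eq_right.mpr le_sup_right]

theorem Irreducible'.le_or_le_of_inf_eq_bot (hp : Irreducible' p) (hw : WeaklyInfDistributive p)
    {x y : α} (hxy : x ⊓ y = ⊥) : x ≤ p ∨ y ≤ p :=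
  (hp (x ⊔ p) (y ⊔ p) le_sup_right le_sup_right (hw x y hxy).ge).imp
    le_sup_left.trans le_sup_left.trans

theorem Irreducible'.le_of_inf_le (hp : Irreducible' p) (hw : WeaklyInfDistributive p)
    {x a : α} (hx : x ≠ ⊥) (hxp : x ⊓ p = ⊥) (h : x ⊓ a ≤ p) : a ≤ p := by
  have hxa : x ⊓ a = ⊥ := le_bot_iff.mp (hxp ▸ le_inf inf_le_left h)
  refine (hp.le_or_le_of_inf_eq_bot hw hxa).resolve_left fun hxle => hx ?_
  rwa [inf_eq_left.mpr hxle] at hxp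

/-- Meeting with a nonzero `x` disjoint from `p` turns any pair `a, b` with `a ⊓ b ≤ p` into
the disjoint pair `x ⊓ a, x ⊓ b`, to which `le_or_le_of_inf_eq_bot` applies. -/
theorem Irreducible'.stronglyIrreducible (hp : Irreducible' p) (hw : WeaklyInfDistributive p)
    (hΩ : ∃ x : α, x ≠ ⊥ ∧ x ⊓ p = ⊥) : StronglyIrreducible p := by
  obtain ⟨x, hx, hxp⟩ := hΩ
  intro a b hab
  have hmeet : (x ⊓ a) ⊓ (x ⊓ b) = ⊥ := by
    refine le_bot_iff.mp (hxp ▸ le_inf (inf_le_left.trans inf_le_left) ?_)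
    calc (x ⊓ a) ⊓ (x ⊓ b) ≤ a ⊓ b := inf_le_inf inf_le_right inf_le_right
      _ ≤ p := hab
  exact (hp.le_or_le_of_inf_eq_bot hw hmeet).imp
    (hp.le_of_inf_le hw hx hxp) (hp.le_of_inf_le hw hx hxp)

end

/-- Suppose `Ω(p) ≠ ∅`. Then `p` is strongly irreducible iff `p` is irreducible and
weakly ∧-distributive. -/
theorem stronglyIrreducible_iff_irreducible_and_weaklyDistributive
    {α : Type*} [CompleteLattice α] (p : α)
    (hΩ : ∃ x : α, x ≠ ⊥ ∧ x ⊓ p = ⊥) :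
    StronglyIrreducible p ↔
      Irreducible' p ∧ (∀ x y : α, x ⊓ y = ⊥ → p = (x ⊔ p) ⊓ (y ⊔ p)) :=
  ⟨fun hp => ⟨hp.irreducible', hp.weaklyInfDistributive⟩,
    fun ⟨hp, hw⟩ => hp.stronglyIrreducible hw hΩ⟩
end

section
/- Let L be a complete lattice and suppose p ∈ L is strongly irreducible in L. Then p is irreducible in L, and moreover either p is a waist in L (comparable to every element of L), or there exist elements p' and q of L with p' < p and p' ≤ q such that: p ⊓ q = p'; every x ∈ L with p' ≤ x and x ⊓ q = p' satisfies x ≤ p (i.e., p is a pseudo-complement of q in the interval [p', ⊤]); and the interval [p', q] is uniform, i.e., for all x, y with p' < x ≤ q and p' < y ≤ q one has x ⊓ y ≠ p'. -/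
/-!
If `p` is not a waist, pick `q` incomparable with `p` and put `p' = p ⊓ q`. Strong irreducibility
applied to `x ⊓ q ≤ p` forces `x ≤ p`, since `q ≰ p`; applied to `x ⊓ y = p' ≤ p` with
`x, y ≤ q` it forces `x ≤ p ⊓ q` or `y ≤ p ⊓ q`, so `[p', q]` is uniform.
-/

namespace StronglyIrreducible

variable {α : Type*} [SemilatticeInf α] {p : α}

theorem irreducible'_s10 (hp : StronglyIrreducible p) : Irreducible' p :=
  fun a b _ _ => hp a b

theorem le_of_inf_le (hp : StronglyIrreducible p) {q x : α} (hqp : ¬q ≤ p)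
    (hx : x ⊓ q ≤ p) : x ≤ p :=
  (hp x q hx).resolve_right hqp

theorem inf_ne_of_inf_lt (hp : StronglyIrreducible p) {q x y : α}
    (hx : p ⊓ q < x) (hxq : x ≤ q) (hy : p ⊓ q < y) (hyq : y ≤ q) : x ⊓ y ≠ p ⊓ q := by
  intro hxy
  rcases hp x y (hxy ▸ inf_le_left) with hxp | hyp
  · exact hx.not_ge (le_inf hxp hxq)
  · exact hy.not_ge (le_inf hyp hyq)

end StronglyIrreducible

/-- A strongly irreducible element `p` of a complete lattice is irreducible, and either
`p` is a waist, or `p` is a pseudo-complement in `[p', ⊤]` of some `q ≥ p'` with `p' < p`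
such that the interval `[p', q]` is uniform. -/
theorem stronglyIrreducible_structure
    {α : Type*} [CompleteLattice α] (p : α) (hp : StronglyIrreducible p) :
    Irreducible' p ∧
      ((∀ x : α, p ≤ x ∨ x ≤ p) ∨
        ∃ p' q : α, p' < p ∧ p' ≤ q ∧ p ⊓ q = p' ∧
          (∀ x : α, p' ≤ x → x ⊓ q = p' → x ≤ p) ∧
          (∀ x y : α, p' < x → x ≤ q → p' < y → y ≤ q → x ⊓ y ≠ p')) := by
  refine ⟨hp.irreducible'_s10, or_iff_not_imp_left.mpr fun hwaist => ?_⟩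
  push Not at hwaist
  obtain ⟨q, hpq, hqp⟩ := hwaist
  refine ⟨p ⊓ q, q, inf_lt_left.mpr hpq, inf_le_right, rfl, ?_, ?_⟩
  · exact fun x _ hx => hp.le_of_inf_le hqp (hx.trans_le inf_le_left)
  · exact fun x y hx hxq hy hyq => hp.inf_ne_of_inf_lt hx hxq hy hyq
end

section
/- Let L be a complete lattice in which ⊥ is cocompact, i.e., for every subset A ⊆ L with ⨅ A = ⊥ there exists a finite subset A' ⊆ A with ⨅ A' = ⊥. Let p ∈ L with Ω(p) ≠ ∅, i.e., there exists x ≠ ⊥ with x ⊓ p = ⊥. Then p is strongly irreducible in L if and only if there exists an atom a ∈ L such that p is a pseudo-complement of a (i.e., a ⊓ p = ⊥ and every x ∈ L with a ⊓ x = ⊥ satisfies x ≤ p). Moreover, in this case every element of L is comparable to a or comparable to p. -/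
/-!
Cocompactness of `⊥` is compactness of `⊤` in the order dual, so by Zorn's lemma the lattice is
atomic and every nonzero `x` with `x ⊓ p = ⊥` lies above an atom `a` with `a ⊓ p = ⊥`. If `p` is
strongly irreducible, then `a ⊓ x = ⊥ ≤ p` and `a ≰ p` force `x ≤ p`, so `p` is the
pseudo-complement of `a`. Conversely, if `p` is the pseudo-complement of an atom `a`, every element
either meets `a` nontrivially, hence lies above `a`, or lies below `p`; two elements not below `p`
both lie above `a`, and so does their meet, which therefore is not below `p`.
-/

theorem isAtomic_of_bot_cocompact {α : Type*} [CompleteLattice α]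
    (hbot : ∀ A : Set α, sInf A = ⊥ → ∃ A' : Set α, A' ⊆ A ∧ A'.Finite ∧ sInf A' = ⊥) :
    IsAtomic α := by
  refine isCoatomic_dual_iff_isAtomic.mp <| CompleteLattice.coatomic_of_top_compact <|
    (CompleteLattice.isCompactElement_iff_exists_le_sSup_of_le_sSup αᵒᵈ _).mpr fun s hs => ?_
  obtain ⟨t, hts, ht, htbot⟩ := hbot (OrderDual.ofDual ⁻¹' s) (top_le_iff.mp hs)
  let t' : Set αᵒᵈ := OrderDual.ofDual ⁻¹' t
  have ht' : t'.Finite := ht.preimage OrderDual.ofDual.injective.injOn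
  refine ⟨ht'.toFinset, by rw [Set.Finite.coe_toFinset]; exact hts, ?_⟩
  rw [Finset.sup_id_eq_sSup, Set.Finite.coe_toFinset]
  exact top_le_iff.mpr htbot

section Lattice

variable {α : Type*} [Lattice α] {a p x : α}

theorem StronglyIrreducible.le_of_inf_le_s11 (hp : StronglyIrreducible p) (ha : ¬a ≤ p)
    (h : a ⊓ x ≤ p) : x ≤ p :=
  (hp a x h).resolve_left ha

variable [OrderBot α]

theorem IsAtom.not_le_of_inf_eq_bot (ha : IsAtom a) (hap : a ⊓ p = ⊥) : ¬a ≤ p :=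
  ha.not_le_iff_disjoint.mpr (disjoint_iff.mpr hap)

theorem IsAtom.le_or_le_of_inf_eq_bot_imp_le (ha : IsAtom a)
    (hp : ∀ x : α, a ⊓ x = ⊥ → x ≤ p) (b : α) : a ≤ b ∨ b ≤ p :=
  or_iff_not_imp_left.mpr fun hab => hp b (disjoint_iff.mp (ha.not_le_iff_disjoint.mp hab))

theorem IsAtom.stronglyIrreducible_of_inf_eq_bot_imp_le (ha : IsAtom a) (hap : a ⊓ p = ⊥)
    (hp : ∀ x : α, a ⊓ x = ⊥ → x ≤ p) : StronglyIrreducible p := by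
  intro x y hxy
  by_contra! hxyp
  have hax := (ha.le_or_le_of_inf_eq_bot_imp_le hp x).resolve_right hxyp.1
  have hay := (ha.le_or_le_of_inf_eq_bot_imp_le hp y).resolve_right hxyp.2
  exact ha.not_le_of_inf_eq_bot hap ((le_inf hax hay).trans hxy)

theorem exists_isAtom_inf_eq_bot [IsAtomic α] (hx : x ≠ ⊥) (hxp : x ⊓ p = ⊥) :
    ∃ a : α, IsAtom a ∧ a ⊓ p = ⊥ := by
  obtain ⟨a, ha, hax⟩ := (eq_bot_or_exists_atom_le x).resolve_left hx
  exact ⟨a, ha, le_bot_iff.mp (hxp ▸ inf_le_inf_right p hax)⟩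

end Lattice

/-- Let `L` be a complete lattice in which `⊥` is cocompact and let `p` satisfy
`Ω(p) ≠ ∅`.  Then `p` is strongly irreducible iff `p` is a pseudo-complement of an
atom `a`; moreover in this case every element is comparable to `a` or to `p`. -/
theorem stronglyIrreducible_iff_pseudoComplement_atom
    {α : Type*} [CompleteLattice α]
    (hbot : ∀ A : Set α, sInf A = ⊥ → ∃ A' : Set α, A' ⊆ A ∧ A'.Finite ∧ sInf A' = ⊥)
    (p : α) (hΩ : ∃ x : α, x ≠ ⊥ ∧ x ⊓ p = ⊥) :
    (StronglyIrreducible p ↔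
      ∃ a : α, IsAtom a ∧ a ⊓ p = ⊥ ∧ (∀ x : α, a ⊓ x = ⊥ → x ≤ p)) ∧
    (∀ a : α, IsAtom a → a ⊓ p = ⊥ → (∀ x : α, a ⊓ x = ⊥ → x ≤ p) →
      ∀ b : α, (a ≤ b ∨ b ≤ a) ∨ (p ≤ b ∨ b ≤ p)) := by
  have : IsAtomic α := isAtomic_of_bot_cocompact hbot
  obtain ⟨x, hx, hxp⟩ := hΩ
  refine ⟨⟨fun hp => ?_, fun ⟨a, ha, hap, hpc⟩ => ha.stronglyIrreducible_of_inf_eq_bot_imp_le hap hpc⟩,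
    fun a ha _ hpc b => ?_⟩
  · obtain ⟨a, ha, hap⟩ := exists_isAtom_inf_eq_bot hx hxp
    exact ⟨a, ha, hap, fun y hy =>
      hp.le_of_inf_le_s11 (ha.not_le_of_inf_eq_bot hap) (hy ▸ bot_le)⟩
  · rcases ha.le_or_le_of_inf_eq_bot_imp_le hpc b with hab | hbp
    · exact Or.inl (Or.inl hab)
    · exact Or.inr (Or.inr hbp)
end

section
/- Let L be a complete modular lattice and let P, Q be finite subsets of L consisting of strongly irreducible elements such that ⨅ P = ⊥ = ⨅ Q and both representations are irredundant, i.e., for every proper subset P' ⊊ P one has ⨅ P' ≠ ⊥, and likewise for Q. Then P and Q have the same cardinality and in fact P = Q. -/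
section

variable {α ι : Type*}

theorem StronglyIrreducible.exists_le_of_finset_inf_le [SemilatticeInf α] [OrderTop α] {p : α}
    (hp : StronglyIrreducible p) (hp_top : p ≠ ⊤) {s : Finset ι} {f : ι → α}
    (hs : s.inf f ≤ p) : ∃ i ∈ s, f i ≤ p := by
  induction s using Finset.cons_induction with
  | empty => exact absurd (top_le_iff.mp hs) hp_top
  | cons a s _ ih =>
    rw [Finset.inf_cons] at hs
    rcases hp _ _ hs with ha_le | hs_le
    · exact ⟨a, Finset.mem_cons_self a s, ha_le⟩
    · obtain ⟨i, hi, hi_le⟩ := ih hs_le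
      exact ⟨i, Finset.mem_cons_of_mem hi, hi_le⟩

section Irredundant

variable [SemilatticeInf α] [BoundedOrder α] [DecidableEq α] {P Q : Finset α}

theorem Finset.erase_inf_not_le_of_irredundant (hP : P.inf id = ⊥)
    (hP_irr : ∀ P' : Finset α, P' ⊂ P → P'.inf id ≠ ⊥) {p : α} (hp : p ∈ P) :
    ¬ (P.erase p).inf id ≤ p := by
  intro h_le
  apply hP_irr _ (Finset.erase_ssubset hp)
  calc (P.erase p).inf id = p ⊓ (P.erase p).inf id := (inf_eq_right.mpr h_le).symm
    _ = P.inf id := by conv_rhs => rw [← Finset.insert_erase hp, Finset.inf_insert, id]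
    _ = ⊥ := hP

theorem Finset.subset_of_irredundant_inf_eq_bot (hP : ∀ p ∈ P, StronglyIrreducible p)
    (hQ : ∀ q ∈ Q, StronglyIrreducible q) (hP_inf : P.inf id = ⊥) (hQ_inf : Q.inf id = ⊥)
    (hP_irr : ∀ P' : Finset α, P' ⊂ P → P'.inf id ≠ ⊥) : P ⊆ Q := by
  intro p hp
  have h_erase := P.erase_inf_not_le_of_irredundant hP_inf hP_irr hp
  have hp_top : p ≠ ⊤ := fun h => h_erase (h ▸ le_top)
  obtain ⟨q, hq, hqp⟩ :=
    (hP p hp).exists_le_of_finset_inf_le hp_top (hQ_inf.symm ▸ bot_le : Q.inf id ≤ p)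
  have hq_top : q ≠ ⊤ := fun h => hp_top (top_le_iff.mp (h ▸ hqp))
  obtain ⟨p', hp', hp'q⟩ :=
    (hQ q hq).exists_le_of_finset_inf_le hq_top (hP_inf.symm ▸ bot_le : P.inf id ≤ q)
  have hp'_eq : p' = p := by
    by_contra hne
    exact h_erase ((Finset.inf_le (Finset.mem_erase.mpr ⟨hne, hp'⟩)).trans (hp'q.trans hqp))
  rwa [le_antisymm (hp'_eq ▸ hp'q) hqp]

end Irredundant

end

theorem strong_KurosOre_general
    {α : Type*} [CompleteLattice α]
    (P Q : Finset α)
    (hP : ∀ p ∈ P, StronglyIrreducible p) (hQ : ∀ q ∈ Q, StronglyIrreducible q)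
    (hPinf : P.inf id = ⊥) (hQinf : Q.inf id = ⊥)
    (hPirr : ∀ P' : Finset α, P' ⊂ P → P'.inf id ≠ ⊥)
    (hQirr : ∀ Q' : Finset α, Q' ⊂ Q → Q'.inf id ≠ ⊥) :
    P.card = Q.card ∧ P = Q := by
  classical
  have hPQ : P = Q :=
    (Finset.subset_of_irredundant_inf_eq_bot hP hQ hPinf hQinf hPirr).antisymm
      (Finset.subset_of_irredundant_inf_eq_bot hQ hP hQinf hPinf hQirr)
  exact ⟨congrArg Finset.card hPQ, hPQ⟩

/-- Two finite irredundant ∧-representations of `⊥` by strongly irreducible elements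
in a complete modular lattice coincide (in particular they have the same cardinality). -/
theorem strong_KurosOre
    {α : Type*} [CompleteLattice α] [IsModularLattice α]
    (P Q : Finset α)
    (hP : ∀ p ∈ P, StronglyIrreducible p) (hQ : ∀ q ∈ Q, StronglyIrreducible q)
    (hPinf : P.inf id = ⊥) (hQinf : Q.inf id = ⊥)
    (hPirr : ∀ P' : Finset α, P' ⊂ P → P'.inf id ≠ ⊥)
    (hQirr : ∀ Q' : Finset α, Q' ⊂ Q → Q'.inf id ≠ ⊥) :
    P.card = Q.card ∧ P = Q :=
  strong_KurosOre_general P Q hP hQ hPinf hQinf hPirr hQirr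
end

section
/- Let R be an associative ring with unity, M a left R-module, and P, Q submodules of M. If P is strongly irreducible in M or P is strongly hollow in M, then every R-linear map from the quotient module P/(P ∩ Q) to the quotient module Q/(P ∩ Q) is zero. -/
/-!
Given `f : P/(P ∩ Q) → Q/(P ∩ Q)`, let `N = {x - y | f x̄ = ȳ}`. Then `P ≤ N + Q` and `N ∩ Q ≤ P`,
so strong hollowness gives `P ≤ N` or `P ≤ Q`, and strong irreducibility gives `N ≤ P` or
`Q ≤ P`. Each of these four inclusions forces `f = 0`.
-/

namespace Submodule

variable {R M : Type*} [Ring R] [AddCommGroup M] [Module R M] {P Q : Submodule R M}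

theorem mk_eq_zero_iff_mem_left (N : Submodule R M) (x : P) :
    (Quotient.mk x : P ⧸ (P ⊓ N).comap P.subtype) = 0 ↔ (x : M) ∈ N := by
  rw [Quotient.mk_eq_zero, mem_comap, subtype_apply, mem_inf, and_iff_right x.2]

theorem mk_eq_zero_iff_mem_right (N : Submodule R M) (y : Q) :
    (Quotient.mk y : Q ⧸ (N ⊓ Q).comap Q.subtype) = 0 ↔ (y : M) ∈ N := by
  rw [Quotient.mk_eq_zero, mem_comap, subtype_apply, mem_inf, and_iff_left y.2]

theorem quotient_hom_eq_zero_of_forall_mk {N : Type*} [AddCommGroup N] [Module R N]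
    {p : Submodule R M} {g : (M ⧸ p) →ₗ[R] N} (h : ∀ x, g (Quotient.mk x) = 0) : g = 0 :=
  linearMap_qext _ (LinearMap.ext h)

def quotHomGraph (f : (P ⧸ (P ⊓ Q).comap P.subtype) →ₗ[R] (Q ⧸ (P ⊓ Q).comap Q.subtype)) :
    Submodule R M :=
  (LinearMap.ker (f ∘ₗ mkQ _ ∘ₗ LinearMap.fst R P Q - mkQ _ ∘ₗ LinearMap.snd R P Q)).map
    (P.subtype ∘ₗ LinearMap.fst R P Q - Q.subtype ∘ₗ LinearMap.snd R P Q)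

variable {f : (P ⧸ (P ⊓ Q).comap P.subtype) →ₗ[R] (Q ⧸ (P ⊓ Q).comap Q.subtype)}

theorem mem_quotHomGraph {m : M} :
    m ∈ quotHomGraph f ↔ ∃ x : P, ∃ y : Q, f (Quotient.mk x) = Quotient.mk y ∧ (x : M) - y = m := by
  simp only [quotHomGraph, mem_map, LinearMap.mem_ker, Prod.exists, LinearMap.sub_apply,
    LinearMap.comp_apply, LinearMap.fst_apply, LinearMap.snd_apply, mkQ_apply, sub_eq_zero,
    subtype_apply]

theorem le_quotHomGraph_sup : P ≤ quotHomGraph f ⊔ Q := by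
  intro x hx
  obtain ⟨y, hy⟩ := Quotient.mk_surjective _ (f (Quotient.mk ⟨x, hx⟩))
  have hxy : x - y ∈ quotHomGraph f := mem_quotHomGraph.2 ⟨⟨x, hx⟩, y, hy.symm, rfl⟩
  simpa using add_mem_sup hxy y.2

theorem quotHomGraph_inf_le : quotHomGraph f ⊓ Q ≤ P := by
  rintro _ ⟨hm, hmQ⟩
  obtain ⟨x, y, hxy, rfl⟩ := mem_quotHomGraph.1 hm
  have hxQ : (x : M) ∈ Q := by simpa using add_mem hmQ y.2
  rw [(mk_eq_zero_iff_mem_left Q x).2 hxQ, map_zero, eq_comm, mk_eq_zero_iff_mem_right] at hxy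
  exact sub_mem x.2 hxy

theorem eq_zero_of_quotHomGraph_le (h : quotHomGraph f ≤ P) : f = 0 := by
  refine quotient_hom_eq_zero_of_forall_mk fun x => ?_
  obtain ⟨y, hy⟩ := Quotient.mk_surjective _ (f (Quotient.mk x))
  have hyP : (y : M) ∈ P := by
    simpa using sub_mem x.2 (h (mem_quotHomGraph.2 ⟨x, y, hy.symm, rfl⟩))
  rw [← hy, (mk_eq_zero_iff_mem_right P y).2 hyP]

theorem eq_zero_of_le_quotHomGraph (h : P ≤ quotHomGraph f) : f = 0 := by
  refine quotient_hom_eq_zero_of_forall_mk fun x => ?_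
  obtain ⟨x', y, hxy, hx⟩ := mem_quotHomGraph.1 (h x.2)
  have hyP : (y : M) ∈ P := by simpa [← hx] using sub_mem x'.2 x.2
  have hx' : (Quotient.mk x : P ⧸ (P ⊓ Q).comap P.subtype) = Quotient.mk x' := by
    rw [← sub_eq_zero, ← Quotient.mk_sub, mk_eq_zero_iff_mem_left, Submodule.coe_sub, ← hx]
    simp
  rw [hx', hxy, (mk_eq_zero_iff_mem_right P y).2 hyP]

theorem quotHom_eq_zero_of_le (h : P ≤ Q) : f = 0 := by
  refine quotient_hom_eq_zero_of_forall_mk fun x => ?_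
  rw [(mk_eq_zero_iff_mem_left Q x).2 (h x.2), map_zero]

theorem quotHom_eq_zero_of_ge (h : Q ≤ P) : f = 0 := by
  refine quotient_hom_eq_zero_of_forall_mk fun x => ?_
  obtain ⟨y, hy⟩ := Quotient.mk_surjective _ (f (Quotient.mk x))
  rw [← hy, (mk_eq_zero_iff_mem_right P y).2 (h y.2)]

end Submodule

/-- If a submodule `P` of `M` is strongly irreducible in `M` or strongly hollow in `M`,
then `Hom(P/(P ∩ Q), Q/(P ∩ Q)) = 0` for every submodule `Q` of `M`. -/
theorem hom_eq_zero_of_stronglyIrreducible_or_stronglyHollow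
    {R : Type*} [Ring R] {M : Type*} [AddCommGroup M] [Module R M]
    (P Q : Submodule R M)
    (h : (∀ K L : Submodule R M, K ⊓ L ≤ P → K ≤ P ∨ L ≤ P) ∨
         (∀ K L : Submodule R M, P ≤ K ⊔ L → P ≤ K ∨ P ≤ L)) :
    ∀ f : (P ⧸ (P ⊓ Q).comap P.subtype) →ₗ[R] (Q ⧸ (P ⊓ Q).comap Q.subtype),
      f = 0 := by
  intro f
  rcases h with irreducible | hollow
  · rcases irreducible _ _ Submodule.quotHomGraph_inf_le with hN | hQ
    · exact Submodule.eq_zero_of_quotHomGraph_le hN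
    · exact Submodule.quotHom_eq_zero_of_ge hQ
  · rcases hollow _ _ Submodule.le_quotHomGraph_sup with hN | hQ
    · exact Submodule.eq_zero_of_le_quotHomGraph hN
    · exact Submodule.quotHom_eq_zero_of_le hQ
end

section
/- Let R be an associative ring with unity, E a simple left R-module and D a left R-module, and let M = E ⊕ D with E identified with the submodule E ⊕ 0 (the range of the inclusion E → E ⊕ D). Then E is strongly hollow in M if and only if for every submodule A of D, every R-linear map from E to the quotient module D/A is zero (equivalently, E does not belong to the Wisbauer category σ[D]). -/
/-!
Write `M = E × D`. A submodule `K` of `M` with `K + (0 × D) = M`, i.e. whose projection to `E` is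
onto, makes `M ⧸ K` a quotient of `D`, and `E × 0 ≤ K` exactly when the induced map `E → M ⧸ K`
vanishes. Conversely every `f : E → D ⧸ A` arises this way, from the kernel of `(e, d) ↦ f e + [d]`.
If `E × 0 ≤ K + L`, the projections of `K` and `L` to `E` span `E`, so by simplicity one of them is
onto; and `E × 0 ≤ 0 × D` is impossible for `E ≠ 0`.
-/

open LinearMap Submodule

section

variable {R E D : Type*} [Ring R] [AddCommGroup E] [Module R E] [AddCommGroup D] [Module R D]

theorem LinearMap.eq_zero_of_forall_to_quotient_eq_zero
    (h : ∀ (A : Submodule R D) (f : E →ₗ[R] D ⧸ A), f = 0)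
    {N : Type*} [AddCommGroup N] [Module R N] {π : D →ₗ[R] N} (hπ : Function.Surjective π)
    (g : E →ₗ[R] N) : g = 0 := by
  let e := π.quotKerEquivOfSurjective hπ
  calc g = e.toLinearMap ∘ₗ (e.symm.toLinearMap ∘ₗ g) := by ext; simp
    _ = 0 := by rw [h (ker π) (e.symm.toLinearMap ∘ₗ g), comp_zero]

theorem Submodule.sup_range_inr_eq_top_iff (K : Submodule R (E × D)) :
    K ⊔ range (inr R E D) = ⊤ ↔ map (LinearMap.fst R E D) K = ⊤ := by
  rw [← ker_fst, ← comap_map_eq, ← comap_top (LinearMap.fst R E D)]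
  exact (comap_injective_of_surjective fst_surjective).eq_iff

theorem LinearMap.ker_sup_range_inr_eq_top {N : Type*} [AddCommGroup N] [Module R N]
    {φ : E × D →ₗ[R] N} (hφ : Function.Surjective (φ ∘ₗ inr R E D)) :
    ker φ ⊔ range (inr R E D) = ⊤ := by
  rw [sup_comm, ← comap_map_eq, ← range_comp, range_eq_top.2 hφ, comap_top]

theorem LinearMap.not_range_inl_le_range_inr [Nontrivial E] :
    ¬ range (inl R E D) ≤ range (inr R E D) := fun hle ↦ by
  obtain ⟨e, he⟩ := exists_ne (0 : E)
  have := disjoint_def.1 disjoint_inl_inr _ (mem_range_self _ e) (hle (mem_range_self _ e))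
  exact he (by simpa using this)

theorem Submodule.range_inl_le_of_sup_range_inr_eq_top
    (h : ∀ (A : Submodule R D) (f : E →ₗ[R] D ⧸ A), f = 0)
    {K : Submodule R (E × D)} (hK : K ⊔ range (inr R E D) = ⊤) :
    range (inl R E D) ≤ K := by
  rw [← K.ker_mkQ, range_le_ker_iff]
  refine eq_zero_of_forall_to_quotient_eq_zero h (π := K.mkQ ∘ₗ inr R E D) ?_ _
  rw [← range_eq_top, range_comp, map_mkQ_eq_top, hK]

theorem Submodule.map_fst_sup_eq_top {K L : Submodule R (E × D)}
    (h : range (inl R E D) ≤ K ⊔ L) :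
    map (LinearMap.fst R E D) K ⊔ map (LinearMap.fst R E D) L = ⊤ := by
  rw [← map_sup, eq_top_iff, ← range_id, ← fst_comp_inl R E D, range_comp]
  exact map_mono h

end

/-- Let `E` be a simple left `R`-module and `D` any left `R`-module, and consider `E` as
the submodule `E ⊕ 0` of `M = E ⊕ D`.  Then `E` is strongly hollow in `M` iff every
`R`-linear map from `E` to a quotient of `D` is zero (i.e. `E ∉ σ[D]`). -/
theorem simple_stronglyHollow_iff_not_in_sigma
    {R : Type*} [Ring R] {E D : Type*}
    [AddCommGroup E] [Module R E] [IsSimpleModule R E]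
    [AddCommGroup D] [Module R D] :
    (∀ K L : Submodule R (E × D),
        LinearMap.range (LinearMap.inl R E D) ≤ K ⊔ L →
        LinearMap.range (LinearMap.inl R E D) ≤ K ∨
        LinearMap.range (LinearMap.inl R E D) ≤ L) ↔
      ∀ (A : Submodule R D) (f : E →ₗ[R] D ⧸ A), f = 0 := by
  constructor
  · intro hollow A f
    let φ := f.coprod A.mkQ
    have hφ : Function.Surjective (φ ∘ₗ inr R E D) := by
      simpa [φ] using A.mkQ_surjective
    rcases hollow (ker φ) (range (inr R E D)) (by rw [ker_sup_range_inr_eq_top hφ]; exact le_top)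
      with hK | hinr
    · simpa [φ] using range_le_ker_iff.1 hK
    · have := IsSimpleModule.nontrivial R E
      exact absurd hinr not_range_inl_le_range_inr
  · intro h K L hKL
    have hsup := map_fst_sup_eq_top hKL
    rcases eq_bot_or_eq_top (map (LinearMap.fst R E D) K) with hK | hK
    · rw [hK, bot_sup_eq, ← sup_range_inr_eq_top_iff] at hsup
      exact .inr (range_inl_le_of_sup_range_inr_eq_top h hsup)
    · rw [← sup_range_inr_eq_top_iff] at hK
      exact .inl (range_inl_le_of_sup_range_inr_eq_top h hK)
end

section
/- Let R be a commutative ring, E a simple R-module, D a finitely generated R-module, and M = E ⊕ D with E identified with the submodule E ⊕ 0 (the range of the inclusion E → E ⊕ D) and D identified with the submodule 0 ⊕ D. Then the following are equivalent: (a) E is strongly hollow in M; (b) every submodule N of M either contains E or is contained in 0 ⊕ D; (c) Ann(E) + Ann(D) = R; (d) Ann(D) is not contained in Ann(E). Here Ann(X) denotes the annihilator ideal {r ∈ R | rX = 0}. -/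
/-!
Since `Ann(E)` is a maximal ideal, (c) and (d) say the same thing. If `Ann(E) + Ann(D) = R`,
some `b ∈ Ann(D)` acts as the identity on `E`, so every submodule `N` contains `(p.1, 0)` for each
of its elements `p`; as `E` is simple this gives (b), and (b) gives (a) at once. Conversely, if
`Ann(D) ⊆ Ann(E)`, then `Ann(E)` lies in the support of the finitely generated module `D`, so some
`d₀ ∈ D` has `Ann(d₀) ⊆ Ann(E)`. For `e₀ ≠ 0` we have `E ⊕ 0 ⊆ (0 ⊕ D) + R (e₀, d₀)`, while
`E ⊕ 0` lies in neither summand.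
-/

namespace Submodule

variable {R M : Type*} [Semiring R] [AddCommMonoid M] [Module R M]

def IsStronglyHollow (P : Submodule R M) : Prop :=
  ∀ K L : Submodule R M, P ≤ K ⊔ L → P ≤ K ∨ P ≤ L

theorem IsStronglyHollow.of_forall_le_or_le {P Q : Submodule R M} (hP : P ≠ ⊥)
    (hPQ : Disjoint P Q) (h : ∀ N : Submodule R M, P ≤ N ∨ N ≤ Q) : P.IsStronglyHollow :=
  fun K L hKL ↦ (h K).imp_right fun hK ↦ (h L).resolve_right fun hL ↦
    hP (hPQ.eq_bot_of_le (hKL.trans (sup_le hK hL)))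

end Submodule

namespace LinearMap

open Submodule

variable {R E D : Type*} [CommRing R] [AddCommGroup E] [Module R E] [AddCommGroup D] [Module R D]

theorem range_inl_ne_bot [Nontrivial E] : range (inl R E D) ≠ ⊥ := by
  obtain ⟨e, he⟩ := exists_ne (0 : E)
  rw [Ne, range_eq_bot]
  exact fun h ↦ he (by simpa using LinearMap.congr_fun h e)

theorem isStronglyHollow_range_inl_of_forall_le_or_le [Nontrivial E]
    (h : ∀ N : Submodule R (E × D), range (inl R E D) ≤ N ∨ N ≤ range (inr R E D)) :
    (range (inl R E D)).IsStronglyHollow :=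
  .of_forall_le_or_le range_inl_ne_bot disjoint_inl_inr h

theorem range_inl_le_of_mem [IsSimpleModule R E] {N : Submodule R (E × D)} {e : E} (he : e ≠ 0)
    (heN : inl R E D e ∈ N) : range (inl R E D) ≤ N := by
  rw [range_le_iff_comap]
  exact (IsSimpleOrder.eq_bot_or_eq_top _).resolve_left fun h ↦
    he ((Submodule.eq_bot_iff _).mp h e heN)

theorem inl_fst_mem_of_annihilator_sup_eq_top
    (h : Module.annihilator R E ⊔ Module.annihilator R D = ⊤) {N : Submodule R (E × D)}
    {p : E × D} (hp : p ∈ N) : inl R E D p.1 ∈ N := by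
  obtain ⟨a, ha, b, hb, hab⟩ := mem_sup.mp (h ▸ mem_top : (1 : R) ∈ _)
  convert N.smul_mem b hp using 1
  ext
  · calc p.1 = (a + b) • p.1 := by rw [hab, one_smul]
      _ = b • p.1 := by rw [add_smul, Module.mem_annihilator.mp ha, zero_add]
  · exact (Module.mem_annihilator.mp hb p.2).symm

theorem range_inl_le_or_le_range_inr [IsSimpleModule R E]
    (h : Module.annihilator R E ⊔ Module.annihilator R D = ⊤) (N : Submodule R (E × D)) :
    range (inl R E D) ≤ N ∨ N ≤ range (inr R E D) := by
  refine or_iff_not_imp_right.mpr fun hN ↦ ?_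
  obtain ⟨p, hpN, hp⟩ := SetLike.not_le_iff_exists.mp hN
  rw [range_inr, mem_ker] at hp
  exact range_inl_le_of_mem hp (inl_fst_mem_of_annihilator_sup_eq_top h hpN)

theorem range_inl_le_range_inr_sup_span {e₀ : E} (he₀ : R ∙ e₀ = ⊤) (d₀ : D) :
    range (inl R E D) ≤ range (inr R E D) ⊔ R ∙ (e₀, d₀) := by
  rintro _ ⟨e, rfl⟩
  obtain ⟨r, rfl⟩ := mem_span_singleton.mp (he₀ ▸ mem_top : e ∈ R ∙ e₀)
  have hdecomp : inl R E D (r • e₀) = inr R E D (-(r • d₀)) + r • (e₀, d₀) := by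
    ext <;> simp
  rw [hdecomp]
  exact add_mem_sup (mem_range_self _ _) (smul_mem _ r (mem_span_singleton_self _))

theorem range_inl_not_le_span {e₀ : E} (he₀ : e₀ ≠ 0) {d₀ : D}
    (h : (R ∙ d₀).annihilator ≤ (R ∙ e₀).annihilator) :
    ¬ range (inl R E D) ≤ R ∙ (e₀, d₀) := fun hle ↦ by
  obtain ⟨r, hr⟩ := mem_span_singleton.mp (hle (mem_range_self _ e₀))
  simp only [Prod.ext_iff, Prod.smul_fst, Prod.smul_snd, inl_apply] at hr
  have hre₀ : r • e₀ = 0 :=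
    (mem_annihilator_span_singleton _ _).mp (h ((mem_annihilator_span_singleton _ _).mpr hr.2))
  exact he₀ (hr.1.symm.trans hre₀)

theorem not_isStronglyHollow_range_inl [IsSimpleModule R E] [Module.Finite R D]
    (h : Module.annihilator R D ≤ Module.annihilator R E) :
    ¬ (range (inl R E D)).IsStronglyHollow := fun hollow ↦ by
  let p : PrimeSpectrum R := ⟨_, (IsSimpleModule.annihilator_isMaximal (M := E)).isPrime⟩
  obtain ⟨d₀, hd₀⟩ :=
    Module.mem_support_iff_exists_annihilator.mp (Module.mem_support_iff_of_finite.mpr h :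
      p ∈ Module.support R D)
  have := IsSimpleModule.nontrivial R E
  obtain ⟨e₀, he₀⟩ := exists_ne (0 : E)
  have hspan := IsSimpleModule.span_singleton_eq_top R he₀
  have hann : (R ∙ e₀).annihilator = Module.annihilator R E := by
    rw [hspan, annihilator_top]
  rcases hollow _ _ (range_inl_le_range_inr_sup_span hspan d₀) with hK | hL
  · exact range_inl_ne_bot (disjoint_inl_inr.eq_bot_of_le hK)
  · exact range_inl_not_le_span he₀ (hann ▸ hd₀) hL

end LinearMap

/-- Let `R` be a commutative ring, `E` a simple `R`-module, `D` a finitely generated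
`R`-module and `M = E ⊕ D`.  The following are equivalent: (a) `E ⊕ 0` is strongly
hollow in `M`; (b) every submodule of `M` contains `E ⊕ 0` or is contained in `0 ⊕ D`;
(c) `Ann(E) + Ann(D) = R`; (d) `Ann(D) ⊄ Ann(E)`. -/
theorem simple_stronglyHollow_tfae
    {R : Type*} [CommRing R] {E D : Type*}
    [AddCommGroup E] [Module R E] [IsSimpleModule R E]
    [AddCommGroup D] [Module R D] [Module.Finite R D] :
    ((∀ K L : Submodule R (E × D),
        LinearMap.range (LinearMap.inl R E D) ≤ K ⊔ L →
        LinearMap.range (LinearMap.inl R E D) ≤ K ∨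
        LinearMap.range (LinearMap.inl R E D) ≤ L) ↔
      (∀ N : Submodule R (E × D),
        LinearMap.range (LinearMap.inl R E D) ≤ N ∨
        N ≤ LinearMap.range (LinearMap.inr R E D))) ∧
    ((∀ K L : Submodule R (E × D),
        LinearMap.range (LinearMap.inl R E D) ≤ K ⊔ L →
        LinearMap.range (LinearMap.inl R E D) ≤ K ∨
        LinearMap.range (LinearMap.inl R E D) ≤ L) ↔
      Module.annihilator R E ⊔ Module.annihilator R D = ⊤) ∧
    ((∀ K L : Submodule R (E × D),
        LinearMap.range (LinearMap.inl R E D) ≤ K ⊔ L →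
        LinearMap.range (LinearMap.inl R E D) ≤ K ∨
        LinearMap.range (LinearMap.inl R E D) ≤ L) ↔
      ¬ Module.annihilator R D ≤ Module.annihilator R E) := by
  have := IsSimpleModule.nontrivial R E
  have hba := LinearMap.isStronglyHollow_range_inl_of_forall_le_or_le (R := R) (E := E) (D := D)
  have had : (LinearMap.range (LinearMap.inl R E D)).IsStronglyHollow →
      ¬ Module.annihilator R D ≤ Module.annihilator R E :=
    fun hollow hle ↦ LinearMap.not_isStronglyHollow_range_inl hle hollow
  have hdc : ¬ Module.annihilator R D ≤ Module.annihilator R E ↔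
      Module.annihilator R E ⊔ Module.annihilator R D = ⊤ :=
    (Ideal.isMaximal_def.mp IsSimpleModule.annihilator_isMaximal).not_le_iff_codisjoint.trans
      codisjoint_iff
  have hcb := LinearMap.range_inl_le_or_le_range_inr (R := R) (E := E) (D := D)
  exact ⟨⟨fun ha ↦ hcb (hdc.mp (had ha)), hba⟩, ⟨fun ha ↦ hdc.mp (had ha), fun hc ↦ hba (hcb hc)⟩,
    ⟨had, fun hd ↦ hba (hcb (hdc.mp hd))⟩⟩
end

section
/- Let R be an associative ring with unity, M a left R-module, and P a submodule of M that is not small in M, i.e., there exists a proper submodule Q of M with P + Q = M. Then P is strongly hollow in M if and only if P is a hollow submodule of M (i.e., whenever K and L are submodules of M contained in P with K + L = P, then K = P or L = P) and P is weakly distributive in M (i.e., P = (P ∩ X) + (P ∩ Y) for all submodules X, Y of M with X + Y = M). -/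
/-!
Strongly hollow and hollow are the lattice notions `SupPrime` and `SupIrred` (a submodule that is
not small is not `⊥`), and weak distributivity is distributivity restricted to pairs with
supremum `⊤`; it makes a sup-irreducible `p` lie below one of any two elements with supremum `⊤`.
Given `K`, `L` with `p ≤ K ⊔ L`, the elements `K ⊔ Q` and `L ⊔ Q` have supremum `⊤` because
`p ⊔ Q = ⊤`, and `Q` can be dropped again since `p ≤ Q` would force `Q = ⊤`.
-/

section WeaklyDistributive

variable {α : Type*} [Lattice α]

theorem not_isMin_of_sup_eq_top [OrderTop α] {p q : α} (hq : q ≠ ⊤) (hpq : p ⊔ q = ⊤) :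
    ¬IsMin p := fun hmin =>
  hq <| hpq ▸ (sup_eq_right.2 (le_inf_iff.1 (hmin inf_le_left)).2).symm

theorem supPrime_iff_of_not_isMin {p : α} (hp : ¬IsMin p) :
    SupPrime p ↔ ∀ b c, p ≤ b ⊔ c → p ≤ b ∨ p ≤ c :=
  and_iff_right hp

theorem supIrred_iff_of_not_isMin {p : α} (hp : ¬IsMin p) :
    SupIrred p ↔ ∀ b c, b ≤ p → c ≤ p → b ⊔ c = p → b = p ∨ c = p :=
  (and_iff_right hp).trans
    ⟨fun h b c _ _ => @h b c, fun h b c hbc => h b c (hbc ▸ le_sup_left) (hbc ▸ le_sup_right) hbc⟩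

variable [OrderTop α] {p q : α}

def IsWeaklyDistributive (p : α) : Prop :=
  ∀ x y : α, x ⊔ y = ⊤ → p = p ⊓ x ⊔ p ⊓ y

theorem SupPrime.isWeaklyDistributive (hp : SupPrime p) : IsWeaklyDistributive p := by
  intro x y hxy
  refine le_antisymm ?_ (sup_le inf_le_left inf_le_left)
  rcases hp.2 (hxy ▸ le_top : p ≤ x ⊔ y) with hx | hy
  · exact le_sup_of_le_left (le_inf le_rfl hx)
  · exact le_sup_of_le_right (le_inf le_rfl hy)

theorem SupIrred.le_or_le_of_sup_eq_top (hp : SupIrred p) (hwd : IsWeaklyDistributive p)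
    {x y : α} (hxy : x ⊔ y = ⊤) : p ≤ x ∨ p ≤ y :=
  (hp.2 (hwd x y hxy).symm).imp inf_eq_left.1 inf_eq_left.1

theorem SupIrred.le_of_le_sup_of_sup_eq_top (hp : SupIrred p) (hwd : IsWeaklyDistributive p)
    (hq : q ≠ ⊤) (hpq : p ⊔ q = ⊤) {a : α} (ha : p ≤ a ⊔ q) : p ≤ a := by
  have haq : a ⊔ q = ⊤ := top_le_iff.1 (hpq ▸ sup_le ha le_sup_right)
  exact (hp.le_or_le_of_sup_eq_top hwd haq).resolve_right
    fun hpq' => hq (hpq ▸ sup_eq_right.2 hpq').symm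

theorem SupIrred.supPrime_of_isWeaklyDistributive (hp : SupIrred p)
    (hwd : IsWeaklyDistributive p) (hq : q ≠ ⊤) (hpq : p ⊔ q = ⊤) : SupPrime p := by
  refine ⟨hp.1, fun b c hbc => ?_⟩
  have hsup : (b ⊔ q) ⊔ (c ⊔ q) = ⊤ := by
    refine top_le_iff.1 (hpq ▸ sup_le (hbc.trans (sup_le_sup le_sup_left le_sup_left)) ?_)
    exact le_sup_right.trans le_sup_left
  exact (hp.le_or_le_of_sup_eq_top hwd hsup).imp (hp.le_of_le_sup_of_sup_eq_top hwd hq hpq)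
    (hp.le_of_le_sup_of_sup_eq_top hwd hq hpq)

theorem supPrime_iff_supIrred_and_isWeaklyDistributive (hq : q ≠ ⊤) (hpq : p ⊔ q = ⊤) :
    SupPrime p ↔ SupIrred p ∧ IsWeaklyDistributive p :=
  ⟨fun hp => ⟨hp.supIrred, hp.isWeaklyDistributive⟩,
    fun ⟨hp, hwd⟩ => hp.supPrime_of_isWeaklyDistributive hwd hq hpq⟩

end WeaklyDistributive

/-- Let `P` be a submodule of `M` which is not small in `M`.  Then `P` is strongly
hollow in `M` iff `P` is a hollow submodule of `M` and `P` is weakly distributive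
in `M`. -/
theorem stronglyHollow_iff_hollow_and_weaklyDistributive
    {R : Type*} [Ring R] {M : Type*} [AddCommGroup M] [Module R M]
    (P : Submodule R M)
    (hnotsmall : ∃ Q : Submodule R M, Q ≠ ⊤ ∧ P ⊔ Q = ⊤) :
    (∀ K L : Submodule R M, P ≤ K ⊔ L → P ≤ K ∨ P ≤ L) ↔
      ((∀ K L : Submodule R M, K ≤ P → L ≤ P → K ⊔ L = P → K = P ∨ L = P) ∧
       (∀ X Y : Submodule R M, X ⊔ Y = ⊤ → P = (P ⊓ X) ⊔ (P ⊓ Y))) := by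
  obtain ⟨Q, hQ, hPQ⟩ := hnotsmall
  have hmin := not_isMin_of_sup_eq_top hQ hPQ
  rw [← supPrime_iff_of_not_isMin hmin, ← supIrred_iff_of_not_isMin hmin]
  exact supPrime_iff_supIrred_and_isWeaklyDistributive hQ hPQ
end
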